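/- arXiv:2008.08359 — 3 statements merged into one kernel-verified Lean document; each statement's English description precedes it below -/
import Mathlib

section
/- Let n be a positive integer, let A be a real n×n matrix and γ_A' > 0 a constant with |e^{At}x| ≤ e^{−γ_A' t}|x| for all t ≤ 0 and x ∈ ℝ^n, and let 0 < γ, ε > 0 with εγ_A' < γ. Fix u₀ ∈ ℝ^n. Then for every pair Φ = (u,v) ∈ C_γ^−, the function K_A^ε(Φ)(t) := e^{εAt}u₀ + ε∫_0^t e^{εA(t−s)} f(u(s)+η(s), v(s)+ξ(s)) ds (t ≤ 0) is continuous on (−∞,0] and satisfies ‖K_A^ε(Φ)‖_γ^− ≤ C_A + (εL_f/(γ − εγ_A'))·‖Φ‖_γ^−, where C_A := |u₀| + L_f C_f/γ_A' + (εL_f/(γ − εγ_A'))(‖η‖_γ^− + ‖ξ‖_γ^−). -/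
open MeasureTheory Set Filter

noncomputable section

/-- `ℝ^n` with the Euclidean norm. -/
abbrev Vec (n : ℕ) := EuclideanSpace ℝ (Fin n)

/-- Action of an `n × n` real matrix on `ℝ^n`. -/
noncomputable def mApply {n : ℕ} (M : Matrix (Fin n) (Fin n) ℝ) (x : Vec n) : Vec n :=
  Matrix.toEuclideanLin M x

/-- The matrix exponential `e^{tA}`. -/
noncomputable def expM {n : ℕ} (A : Matrix (Fin n) (Fin n) ℝ) (t : ℝ) :
    Matrix (Fin n) (Fin n) ℝ :=
  NormedSpace.exp (t • A)

/-- The norm `‖u‖_γ^- = sup_{t ≤ 0} e^{γ t} ‖u t‖` on `C_γ^-`. -/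
noncomputable def cNorm {n : ℕ} (γ : ℝ) (u : ℝ → Vec n) : ℝ :=
  sSup ((fun t => Real.exp (γ * t) * ‖u t‖) '' Iic (0:ℝ))

/-- Membership in the Banach space `C_γ^-`: continuity on `(-∞, 0]` together with
finiteness of the norm `sup_{t ≤ 0} e^{γ t} ‖u t‖`. -/
def memCneg {n : ℕ} (γ : ℝ) (u : ℝ → Vec n) : Prop :=
  ContinuousOn u (Iic 0) ∧
    BddAbove ((fun t => Real.exp (γ * t) * ‖u t‖) '' Iic (0:ℝ))

/-- The `A`-component of the Lyapunov–Perron map: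
`K_A^ε(Φ)(t) = e^{εAt} u₀ + ε ∫_0^t e^{εA(t-s)} f(u(s)+η(s), v(s)+ξ(s)) ds`. -/
noncomputable def KA {n : ℕ} (A : Matrix (Fin n) (Fin n) ℝ) (ε : ℝ) (u₀ : Vec n)
    (f : Vec n → Vec n → Vec n) (η ξ u v : ℝ → Vec n) (t : ℝ) : Vec n :=
  mApply (expM A (ε * t)) u₀ +
    ε • ∫ s in (0:ℝ)..t, mApply (expM A (ε * (t - s))) (f (u s + η s) (v s + ξ s))

/-- The `B`-component of the Lyapunov–Perron map:
`K_B^ε(Φ)(t) = ∫_{-∞}^t e^{B(t-s)} g(u(s)+η(s), v(s)+ξ(s)) ds`. -/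
noncomputable def KB {n : ℕ} (B : Matrix (Fin n) (Fin n) ℝ)
    (g : Vec n → Vec n → Vec n) (η ξ u v : ℝ → Vec n) (t : ℝ) : Vec n :=
  ∫ s in Iic t, mApply (expM B (t - s)) (g (u s + η s) (v s + ξ s))

/-! The forcing `s ↦ f (u s + η s, v s + ξ s)` is bounded by `L_f (C_f + e^{-γ s} M)`, where `M` is
the sum of the four weighted norms. The backward contraction `|e^{εAτ}x| ≤ e^{-εγ_A' τ}|x|` and
the weight `e^{γ t}` turn the two parts of this bound into `∫_t^0 e^{εγ_A' s} ds ≤ 1/(εγ_A')` and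
`∫_t^0 e^{-(γ - εγ_A')(s - t)} ds ≤ 1/(γ - εγ_A')`, which is where the constants come from.
Continuity holds because the integral is a parametric integral of a jointly continuous kernel once
the forcing is frozen at its value at `0` to the right of `0`. -/

open Real

theorem continuous_uncurry_of_norm_sub_le {E F G : Type*} [SeminormedAddCommGroup E]
    [SeminormedAddCommGroup F] [SeminormedAddCommGroup G] {f : E → F → G} {L : ℝ}
    (hf : ∀ x₁ y₁ x₂ y₂, ‖f x₁ y₁ - f x₂ y₂‖ ≤ L * (‖x₁ - x₂‖ + ‖y₁ - y₂‖)) :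
    Continuous (Function.uncurry f) := by
  refine continuous_iff_continuousAt.2 fun p => ?_
  rw [ContinuousAt, tendsto_iff_norm_sub_tendsto_zero]
  have hbound : Continuous fun q : E × F => L * (‖q.1 - p.1‖ + ‖q.2 - p.2‖) := by fun_prop
  refine squeeze_zero (fun _ => norm_nonneg _) (fun q => hf _ _ _ _) ?_
  simpa using hbound.tendsto p

open scoped Matrix.Norms.Operator in
theorem continuous_expM {n : ℕ} (A : Matrix (Fin n) (Fin n) ℝ) : Continuous (expM A) :=
  show Continuous fun t : ℝ => NormedSpace.exp (t • A) by fun_prop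

theorem continuous_mApply {n : ℕ} :
    Continuous fun p : Matrix (Fin n) (Fin n) ℝ × Vec n => mApply p.1 p.2 := by
  simp only [mApply, Matrix.toLpLin_apply]
  exact PiLp.continuous_toLp 2 _ |>.comp
    (continuous_fst.matrix_mulVec ((PiLp.continuous_ofLp 2 _).comp continuous_snd))

theorem continuousOn_intervalIntegral_Iic {E : Type*} [NormedAddCommGroup E] [NormedSpace ℝ E]
    {b : ℝ} {k : ℝ → ℝ → E} (hk : ContinuousOn (Function.uncurry k) (univ ×ˢ Iic b)) :
    ContinuousOn (fun t => ∫ s in b..t, k t s) (Iic b) := by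
  have hk' : Continuous fun p : ℝ × ℝ => k p.1 (min p.2 b) :=
    hk.comp_continuous (f := fun p : ℝ × ℝ => (p.1, min p.2 b)) (by fun_prop)
      fun p => ⟨trivial, min_le_right p.2 b⟩
  refine (intervalIntegral.continuous_parametric_intervalIntegral_of_continuous
    (f := fun t s => k t (min s b)) (μ := volume) (a₀ := b) hk' continuous_id).continuousOn.congr
    fun t ht => ?_
  refine intervalIntegral.integral_congr fun s hs => ?_
  rw [uIcc_of_ge ht] at hs
  simp [min_eq_left hs.2]

theorem integral_exp_mul_le {κ : ℝ} (hκ : 0 < κ) (a b : ℝ) :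
    ∫ s in a..b, exp (κ * s) ≤ exp (κ * b) / κ := by
  rw [intervalIntegral.integral_comp_mul_left exp hκ.ne', integral_exp, smul_eq_mul,
    inv_mul_eq_div]
  gcongr
  linarith [exp_pos (κ * a)]

section CNorm

variable {n : ℕ} {γ : ℝ} {w : ℝ → Vec n}

theorem le_cNorm (hw : memCneg γ w) {s : ℝ} (hs : s ≤ 0) : exp (γ * s) * ‖w s‖ ≤ cNorm γ w :=
  le_csSup hw.2 ⟨s, hs, rfl⟩

theorem cNorm_nonneg (hw : memCneg γ w) : 0 ≤ cNorm γ w :=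
  (by positivity : 0 ≤ exp (γ * 0) * ‖w 0‖).trans (le_cNorm hw le_rfl)

theorem norm_le_exp_mul_cNorm (hw : memCneg γ w) {s : ℝ} (hs : s ≤ 0) :
    ‖w s‖ ≤ exp (-(γ * s)) * cNorm γ w := by
  rw [exp_neg, ← div_eq_inv_mul, le_div_iff₀' (exp_pos _)]
  exact le_cNorm hw hs

end CNorm

theorem continuousOn_KA {n : ℕ} (A : Matrix (Fin n) (Fin n) ℝ) (ε : ℝ) (u₀ : Vec n)
    {f : Vec n → Vec n → Vec n} {η ξ u v : ℝ → Vec n}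
    (hF : ContinuousOn (fun s => f (u s + η s) (v s + ξ s)) (Iic 0)) :
    ContinuousOn (KA A ε u₀ f η ξ u v) (Iic 0) := by
  have hexp : Continuous fun p : ℝ × Vec n => mApply (expM A p.1) p.2 :=
    continuous_mApply.comp (((continuous_expM A).comp continuous_fst).prodMk continuous_snd)
  have hkernel : ContinuousOn
      (Function.uncurry fun t s => mApply (expM A (ε * (t - s))) (f (u s + η s) (v s + ξ s)))
      (univ ×ˢ Iic 0) :=
    hexp.comp_continuousOn
      (f := fun p : ℝ × ℝ => (ε * (p.1 - p.2), f (u p.2 + η p.2) (v p.2 + ξ p.2)))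
      ((by fun_prop : Continuous fun p : ℝ × ℝ => ε * (p.1 - p.2)).continuousOn.prodMk
        (hF.comp continuousOn_snd fun _ hp => (mem_prod.1 hp).2))
  exact (hexp.comp (by fun_prop : Continuous fun t : ℝ => (ε * t, u₀))).continuousOn.add
    ((continuousOn_intervalIntegral_Iic hkernel).const_smul ε)

theorem norm_KA_le {n : ℕ} {A : Matrix (Fin n) (Fin n) ℝ} {γA' : ℝ}
    (hA : ∀ t ≤ (0:ℝ), ∀ x : Vec n, ‖mApply (expM A t) x‖ ≤ exp (-γA' * t) * ‖x‖)
    {ε : ℝ} (hε : 0 ≤ ε) (u₀ : Vec n) {f : Vec n → Vec n → Vec n} {η ξ u v : ℝ → Vec n}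
    {φ : ℝ → ℝ} (hφ : Continuous φ) (hF : ∀ s ≤ 0, ‖f (u s + η s) (v s + ξ s)‖ ≤ φ s)
    {t : ℝ} (ht : t ≤ 0) :
    ‖KA A ε u₀ f η ξ u v t‖ ≤
      exp (-(ε * γA') * t) * ‖u₀‖ + ε * ∫ s in t..0, exp (-(ε * γA') * (t - s)) * φ s := by
  have hexp : ∀ τ, exp (-γA' * (ε * τ)) = exp (-(ε * γA') * τ) := fun τ => by ring_nf
  have hintegral : ‖∫ s in (0:ℝ)..t, mApply (expM A (ε * (t - s))) (f (u s + η s) (v s + ξ s))‖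
      ≤ ∫ s in t..0, exp (-(ε * γA') * (t - s)) * φ s := by
    rw [intervalIntegral.integral_symm, norm_neg]
    refine intervalIntegral.norm_integral_le_of_norm_le ht (ae_of_all _ fun s hs => ?_)
      (((by fun_prop : Continuous fun s => exp (-(ε * γA') * (t - s))).mul hφ).intervalIntegrable
        _ _)
    rw [← hexp]
    exact (hA _ (mul_nonpos_of_nonneg_of_nonpos hε (by linarith [hs.1])) _).trans
      (mul_le_mul_of_nonneg_left (hF s hs.2) (exp_pos _).le)
  calc ‖KA A ε u₀ f η ξ u v t‖
      ≤ ‖mApply (expM A (ε * t)) u₀‖ + ε * ‖∫ s in (0:ℝ)..t,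
          mApply (expM A (ε * (t - s))) (f (u s + η s) (v s + ξ s))‖ := by
        rw [KA, ← Real.norm_of_nonneg hε, ← norm_smul, Real.norm_of_nonneg hε]
        exact norm_add_le _ _
    _ ≤ _ := by
        rw [← hexp]
        gcongr
        exact hA _ (mul_nonpos_of_nonneg_of_nonpos hε ht) _

theorem exp_mul_integral_le {c γ L C M t : ℝ} (hc : 0 < c) (hcγ : c < γ) (hL : 0 ≤ L)
    (hC : 0 ≤ C) (hM : 0 ≤ M) (ht : t ≤ 0) :
    exp (γ * t) * ∫ s in t..0, exp (-c * (t - s)) * (L * (C + exp (-(γ * s)) * M)) ≤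
      L * C / c + L * M / (γ - c) := by
  have hdecay : exp ((γ - c) * t) ≤ 1 := exp_le_one_iff.2 (by nlinarith)
  have hpointwise : ∀ s, exp (γ * t) * (exp (-c * (t - s)) * (L * (C + exp (-(γ * s)) * M))) ≤
      L * C * exp (c * s) + L * M * exp ((γ - c) * (t - s)) := fun s => by
    have e₁ : exp (γ * t) * exp (-c * (t - s)) = exp ((γ - c) * t) * exp (c * s) := by
      rw [← exp_add, ← exp_add]; ring_nf
    have e₂ : exp (γ * t) * exp (-c * (t - s)) * exp (-(γ * s)) = exp ((γ - c) * (t - s)) := by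
      rw [← exp_add, ← exp_add]; ring_nf
    have hweight : exp ((γ - c) * t) * exp (c * s) ≤ exp (c * s) :=
      mul_le_of_le_one_left (exp_pos _).le hdecay
    linear_combination (L * C) * e₁ + (L * M) * e₂ + (L * C) * hweight
  have hgrowth : ∫ s in t..0, exp (c * s) ≤ 1 / c := by
    simpa using integral_exp_mul_le hc t 0
  have hdecay' : ∫ s in t..0, exp ((γ - c) * (t - s)) ≤ 1 / (γ - c) := by
    rw [intervalIntegral.integral_comp_sub_left (fun s => exp ((γ - c) * s)) t]
    simpa using integral_exp_mul_le (sub_pos.2 hcγ) t 0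
  calc exp (γ * t) * ∫ s in t..0, exp (-c * (t - s)) * (L * (C + exp (-(γ * s)) * M))
      = ∫ s in t..0, exp (γ * t) * (exp (-c * (t - s)) * (L * (C + exp (-(γ * s)) * M))) :=
        (intervalIntegral.integral_const_mul _ _).symm
    _ ≤ ∫ s in t..0, (L * C * exp (c * s) + L * M * exp ((γ - c) * (t - s))) :=
        intervalIntegral.integral_mono_on ht (Continuous.intervalIntegrable (by fun_prop) _ _)
          (Continuous.intervalIntegrable (by fun_prop) _ _) fun s _ => hpointwise s
    _ = L * C * (∫ s in t..0, exp (c * s)) + L * M * ∫ s in t..0, exp ((γ - c) * (t - s)) := by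
        rw [intervalIntegral.integral_add (Continuous.intervalIntegrable (by fun_prop) _ _)
          (Continuous.intervalIntegrable (by fun_prop) _ _), intervalIntegral.integral_const_mul,
          intervalIntegral.integral_const_mul]
    _ ≤ L * C * (1 / c) + L * M * (1 / (γ - c)) := by gcongr
    _ = L * C / c + L * M / (γ - c) := by ring

theorem statement0_general
    (n : ℕ)
    (A : Matrix (Fin n) (Fin n) ℝ) (γA' : ℝ) (hγA' : 0 < γA')
    (hA : ∀ t ≤ (0:ℝ), ∀ x : Vec n, ‖mApply (expM A t) x‖ ≤ Real.exp (-γA' * t) * ‖x‖)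
    (γ ε : ℝ) (hε : 0 < ε) (hεγ : ε * γA' < γ)
    (f : Vec n → Vec n → Vec n) (Lf Cf : ℝ) (hLf : 0 < Lf) (hCf : 0 < Cf)
    (hfLip : ∀ x₁ y₁ x₂ y₂ : Vec n,
      ‖f x₁ y₁ - f x₂ y₂‖ ≤ Lf * (‖x₁ - x₂‖ + ‖y₁ - y₂‖))
    (hfGrow : ∀ x y : Vec n, ‖f x y‖ ≤ Lf * (Cf + ‖x‖ + ‖y‖))
    (η ξ : ℝ → Vec n) (hη : memCneg γ η) (hξ : memCneg γ ξ)
    (u₀ : Vec n) (u v : ℝ → Vec n) (hu : memCneg γ u) (hv : memCneg γ v) :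
    ContinuousOn (KA A ε u₀ f η ξ u v) (Iic 0) ∧
      ∀ t ≤ (0:ℝ),
        Real.exp (γ * t) * ‖KA A ε u₀ f η ξ u v t‖ ≤
          (‖u₀‖ + Lf * Cf / γA' +
              ε * Lf / (γ - ε * γA') * (cNorm γ η + cNorm γ ξ)) +
            ε * Lf / (γ - ε * γA') * (cNorm γ u + cNorm γ v) := by
  have hc : 0 < ε * γA' := mul_pos hε hγA'
  set M := cNorm γ u + cNorm γ η + (cNorm γ v + cNorm γ ξ)
  have hM : 0 ≤ M := by
    have := cNorm_nonneg hu; have := cNorm_nonneg hη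
    have := cNorm_nonneg hv; have := cNorm_nonneg hξ
    positivity
  have hF : ∀ s ≤ 0, ‖f (u s + η s) (v s + ξ s)‖ ≤ Lf * (Cf + exp (-(γ * s)) * M) :=
    fun s hs => (hfGrow _ _).trans <| by
      have := norm_add_le (u s) (η s); have := norm_add_le (v s) (ξ s)
      have := norm_le_exp_mul_cNorm hu hs; have := norm_le_exp_mul_cNorm hη hs
      have := norm_le_exp_mul_cNorm hv hs; have := norm_le_exp_mul_cNorm hξ hs
      rw [add_assoc]
      gcongr
      simp only [M, mul_add]
      linarith
  refine ⟨continuousOn_KA A ε u₀ ((continuous_uncurry_of_norm_sub_le hfLip).comp_continuousOn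
    ((hu.1.add hη.1).prodMk (hv.1.add hξ.1))), fun t ht => ?_⟩
  have hu₀ : exp (γ * t) * exp (-(ε * γA') * t) ≤ 1 := by
    rw [← exp_add, exp_le_one_iff]; nlinarith
  calc exp (γ * t) * ‖KA A ε u₀ f η ξ u v t‖
      ≤ exp (γ * t) * (exp (-(ε * γA') * t) * ‖u₀‖ +
          ε * ∫ s in t..0, exp (-(ε * γA') * (t - s)) * (Lf * (Cf + exp (-(γ * s)) * M))) :=
        mul_le_mul_of_nonneg_left (norm_KA_le hA hε.le u₀ (by fun_prop) hF ht) (exp_pos _).le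
    _ = exp (γ * t) * exp (-(ε * γA') * t) * ‖u₀‖ + ε * (exp (γ * t) *
          ∫ s in t..0, exp (-(ε * γA') * (t - s)) * (Lf * (Cf + exp (-(γ * s)) * M))) := by ring
    _ ≤ ‖u₀‖ + ε * (Lf * Cf / (ε * γA') + Lf * M / (γ - ε * γA')) := by
        gcongr
        · exact mul_le_of_le_one_left (norm_nonneg _) hu₀
        · exact exp_mul_integral_le hc hεγ hLf.le hCf.le hM ht
    _ = _ := by field_simp; ring

/-- bound for the `A`-component of the Lyapunov–Perron map on `C_γ^-`. -/
theorem statement0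
    (n : ℕ) (hn : 0 < n)
    (A : Matrix (Fin n) (Fin n) ℝ) (γA' : ℝ) (hγA' : 0 < γA')
    (hA : ∀ t ≤ (0:ℝ), ∀ x : Vec n, ‖mApply (expM A t) x‖ ≤ Real.exp (-γA' * t) * ‖x‖)
    (γ ε : ℝ) (hγ : 0 < γ) (hε : 0 < ε) (hεγ : ε * γA' < γ)
    (f : Vec n → Vec n → Vec n) (Lf Cf : ℝ) (hLf : 0 < Lf) (hCf : 0 < Cf)
    (hfLip : ∀ x₁ y₁ x₂ y₂ : Vec n,
      ‖f x₁ y₁ - f x₂ y₂‖ ≤ Lf * (‖x₁ - x₂‖ + ‖y₁ - y₂‖))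
    (hfGrow : ∀ x y : Vec n, ‖f x y‖ ≤ Lf * (Cf + ‖x‖ + ‖y‖))
    (η ξ : ℝ → Vec n) (hη : memCneg γ η) (hξ : memCneg γ ξ)
    (u₀ : Vec n) (u v : ℝ → Vec n) (hu : memCneg γ u) (hv : memCneg γ v) :
    ContinuousOn (KA A ε u₀ f η ξ u v) (Iic 0) ∧
      ∀ t ≤ (0:ℝ),
        Real.exp (γ * t) * ‖KA A ε u₀ f η ξ u v t‖ ≤
          (‖u₀‖ + Lf * Cf / γA' +
              ε * Lf / (γ - ε * γA') * (cNorm γ η + cNorm γ ξ)) +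
            ε * Lf / (γ - ε * γA') * (cNorm γ u + cNorm γ v) :=
  statement0_general n A γA' hγA' hA γ ε hε hεγ f Lf Cf hLf hCf hfLip hfGrow η ξ hη hξ u₀ u v hu hv
end
end

section
/- Let F, G : [0,∞) × ℝ^n × ℝ^n → ℝ^n be continuous with |F(s,a,b)| ≤ L_f(|a|+|b|) and |G(s,a,b)| ≤ L_g(|a|+|b|) for all s ≥ 0 and a, b ∈ ℝ^n, let v̂₀ ∈ ℝ^n, and set ρ(ε) := εL_f/(γ − εγ_A') + L_g/(γ_B − γ). Suppose ρ(ε) < 1 and Ψ = (û,v̂) ∈ C_γ^+ satisfies, for all t ≥ 0, û(t) = ε∫_t^{+∞} e^{εA(t−s)} F(s, û(s), v̂(s)) ds and v̂(t) = e^{Bt} v̂₀ + ∫_0^t e^{B(t−s)} G(s, û(s), v̂(s)) ds. Then ‖Ψ‖_γ^+ ≤ |v̂₀|/(1 − ρ(ε)); in particular |û(t)| + |v̂(t)| ≤ e^{−γt}|v̂₀|/(1 − ρ(ε)) for all t ≥ 0 (exponential tracking). -/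
open MeasureTheory Set Filter

noncomputable section

/-- The norm `‖u‖_γ^+ = sup_{t ≥ 0} e^{γ t} ‖u t‖` on `C_γ^+`. -/
noncomputable def pNorm {n : ℕ} (γ : ℝ) (u : ℝ → Vec n) : ℝ :=
  sSup ((fun t => Real.exp (γ * t) * ‖u t‖) '' Ici (0:ℝ))

/-- Membership in the Banach space `C_γ^+`: continuity on `[0, ∞)` together with
finiteness of the norm `sup_{t ≥ 0} e^{γ t} ‖u t‖`. -/
def memCpos {n : ℕ} (γ : ℝ) (u : ℝ → Vec n) : Prop :=
  ContinuousOn u (Ici 0) ∧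
    BddAbove ((fun t => Real.exp (γ * t) * ‖u t‖) '' Ici (0:ℝ))

/-- `I_A^ε(Ψ)(t) = ε ∫_t^∞ e^{εA(t−s)} F(s, û(s), v̂(s)) ds`. -/
noncomputable def IA {n : ℕ} (A : Matrix (Fin n) (Fin n) ℝ) (ε : ℝ)
    (F : ℝ → Vec n → Vec n → Vec n) (u v : ℝ → Vec n) (t : ℝ) : Vec n :=
  ε • ∫ s in Ici t, mApply (expM A (ε * (t - s))) (F s (u s) (v s))

/-- `I_B^ε(Ψ)(t) = e^{Bt} v̂₀ + ∫_0^t e^{B(t−s)} G(s, û(s), v̂(s)) ds`. -/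
noncomputable def IB {n : ℕ} (B : Matrix (Fin n) (Fin n) ℝ)
    (G : ℝ → Vec n → Vec n → Vec n) (v₀ : Vec n) (u v : ℝ → Vec n) (t : ℝ) : Vec n :=
  mApply (expM B t) v₀ + ∫ s in (0:ℝ)..t, mApply (expM B (t - s)) (G s (u s) (v s))

/-! Let `M = ‖û‖_γ^+ + ‖v̂‖_γ^+`, finite because `û, v̂ ∈ C_γ^+`, so that
`|û(s)| + |v̂(s)| ≤ e^{-γs} M`. Inserting this bound into the two integral equations and using
the dichotomy estimates for `e^{At}` (`t ≤ 0`) and `e^{Bt}` (`t ≥ 0`) gives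
`‖û‖_γ^+ ≤ εL_f/(γ - εγ_A') M` and `‖v̂‖_γ^+ ≤ |v̂₀| + L_g/(γ_B - γ) M`. Adding them,
`M ≤ ρ(ε) M + |v̂₀|`, and `ρ(ε) < 1` yields `M ≤ |v̂₀|/(1 - ρ(ε))`. -/

theorem norm_setIntegral_Ici_le_of_norm_le_exp {E : Type*} [NormedAddCommGroup E]
    [NormedSpace ℝ E] {f : ℝ → E} {K a t : ℝ} (ha : a < 0)
    (hf : ∀ s ≥ t, ‖f s‖ ≤ K * Real.exp (a * s)) :
    ‖∫ s in Ici t, f s‖ ≤ K * (-Real.exp (a * t) / a) := by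
  have hg : IntegrableOn (fun s => K * Real.exp (a * s)) (Ici t) :=
    ((integrableOn_Ici_iff_integrableOn_Ioi (by simp)).mpr
      (integrableOn_exp_mul_Ioi ha t)).const_mul K
  calc ‖∫ s in Ici t, f s‖ ≤ ∫ s in Ici t, K * Real.exp (a * s) :=
        norm_integral_le_of_norm_le hg ((ae_restrict_mem measurableSet_Ici).mono hf)
    _ = K * (-Real.exp (a * t) / a) := by
        rw [integral_const_mul, integral_Ici_eq_integral_Ioi, integral_exp_mul_Ioi ha]

theorem norm_intervalIntegral_le_of_norm_le_exp {E : Type*} [NormedAddCommGroup E]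
    [NormedSpace ℝ E] {f : ℝ → E} {K c a b : ℝ} (hc : c ≠ 0) (hab : a ≤ b)
    (hf : ∀ s ∈ Ioc a b, ‖f s‖ ≤ K * Real.exp (c * s)) :
    ‖∫ s in a..b, f s‖ ≤ K * ((Real.exp (c * b) - Real.exp (c * a)) / c) := by
  calc ‖∫ s in a..b, f s‖ ≤ ∫ s in a..b, K * Real.exp (c * s) :=
        intervalIntegral.norm_integral_le_of_norm_le hab (Eventually.of_forall hf)
          (by apply Continuous.intervalIntegrable; fun_prop)
    _ = K * ((Real.exp (c * b) - Real.exp (c * a)) / c) := by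
        rw [intervalIntegral.integral_const_mul, intervalIntegral.integral_comp_mul_left _ hc,
          integral_exp, smul_eq_mul, inv_mul_eq_div]

theorem pNorm_le {n : ℕ} {γ C : ℝ} {u : ℝ → Vec n}
    (hC : ∀ t ≥ (0:ℝ), Real.exp (γ * t) * ‖u t‖ ≤ C) : pNorm γ u ≤ C :=
  csSup_le (nonempty_Ici.image _) (by rintro _ ⟨t, ht, rfl⟩; exact hC t ht)

theorem memCpos.exp_mul_norm_le_pNorm {n : ℕ} {γ t : ℝ} {u : ℝ → Vec n} (hu : memCpos γ u)
    (ht : 0 ≤ t) : Real.exp (γ * t) * ‖u t‖ ≤ pNorm γ u :=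
  le_csSup hu.2 ⟨t, ht, rfl⟩

theorem memCpos.norm_le_exp_mul_pNorm {n : ℕ} {γ t : ℝ} {u : ℝ → Vec n} (hu : memCpos γ u)
    (ht : 0 ≤ t) : ‖u t‖ ≤ Real.exp (-(γ * t)) * pNorm γ u := by
  rw [Real.exp_neg, ← div_eq_inv_mul, le_div_iff₀' (Real.exp_pos _)]
  exact hu.exp_mul_norm_le_pNorm ht

theorem exp_mul_norm_IA_le {n : ℕ} {A : Matrix (Fin n) (Fin n) ℝ} {γA' γ ε Lf M t : ℝ}
    {F : ℝ → Vec n → Vec n → Vec n} {u v : ℝ → Vec n}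
    (hA : ∀ t ≤ (0:ℝ), ∀ x : Vec n, ‖mApply (expM A t) x‖ ≤ Real.exp (-γA' * t) * ‖x‖)
    (hε : 0 < ε) (hεγ : ε * γA' < γ) (hLf : 0 ≤ Lf)
    (hFgrow : ∀ s ≥ (0:ℝ), ∀ a b : Vec n, ‖F s a b‖ ≤ Lf * (‖a‖ + ‖b‖))
    (huv : ∀ s ≥ (0:ℝ), ‖u s‖ + ‖v s‖ ≤ Real.exp (-(γ * s)) * M) (ht : 0 ≤ t) :
    Real.exp (γ * t) * ‖IA A ε F u v t‖ ≤ ε * Lf / (γ - ε * γA') * M := by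
  set K := Lf * M * Real.exp (-(ε * γA' * t)) with hK
  have hkernel : ∀ s ≥ t,
      ‖mApply (expM A (ε * (t - s))) (F s (u s) (v s))‖ ≤ K * Real.exp ((ε * γA' - γ) * s) := by
    intro s hs
    calc ‖mApply (expM A (ε * (t - s))) (F s (u s) (v s))‖
        ≤ Real.exp (-γA' * (ε * (t - s))) * (Lf * (Real.exp (-(γ * s)) * M)) := by
          refine (hA _ (mul_nonpos_of_nonneg_of_nonpos hε.le (by linarith)) _).trans ?_
          gcongr
          exact (hFgrow s (ht.trans hs) _ _).trans (by gcongr; exact huv s (ht.trans hs))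
      _ = Lf * M * Real.exp (-γA' * (ε * (t - s)) + -(γ * s)) := by rw [Real.exp_add]; ring
      _ = K * Real.exp ((ε * γA' - γ) * s) := by
          rw [hK, mul_assoc (Lf * M), ← Real.exp_add]; ring_nf
  have hcancel :
      Real.exp (γ * t) * (Real.exp (-(ε * γA' * t)) * Real.exp ((ε * γA' - γ) * t)) = 1 := by
    rw [← Real.exp_add, ← Real.exp_add, ← Real.exp_zero]
    ring_nf
  calc Real.exp (γ * t) * ‖IA A ε F u v t‖
      ≤ Real.exp (γ * t) * (ε * (K * (-Real.exp ((ε * γA' - γ) * t) / (ε * γA' - γ)))) := by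
        rw [IA, norm_smul, Real.norm_of_nonneg hε.le]
        gcongr
        exact norm_setIntegral_Ici_le_of_norm_le_exp (by linarith) hkernel
    _ = ε * Lf / (γ - ε * γA') * M *
          (Real.exp (γ * t) * (Real.exp (-(ε * γA' * t)) * Real.exp ((ε * γA' - γ) * t))) := by
        rw [neg_div, ← div_neg, neg_sub]
        ring
    _ = ε * Lf / (γ - ε * γA') * M := by rw [hcancel, mul_one]

theorem exp_mul_norm_IB_le {n : ℕ} {B : Matrix (Fin n) (Fin n) ℝ} {γB γ Lg M t : ℝ}
    {G : ℝ → Vec n → Vec n → Vec n} {v₀ : Vec n} {u v : ℝ → Vec n}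
    (hB : ∀ t ≥ (0:ℝ), ∀ y : Vec n, ‖mApply (expM B t) y‖ ≤ Real.exp (-γB * t) * ‖y‖)
    (hγγB : γ < γB) (hLg : 0 ≤ Lg)
    (hGgrow : ∀ s ≥ (0:ℝ), ∀ a b : Vec n, ‖G s a b‖ ≤ Lg * (‖a‖ + ‖b‖))
    (huv : ∀ s ≥ (0:ℝ), ‖u s‖ + ‖v s‖ ≤ Real.exp (-(γ * s)) * M) (ht : 0 ≤ t) :
    Real.exp (γ * t) * ‖IB B G v₀ u v t‖ ≤ ‖v₀‖ + Lg / (γB - γ) * M := by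
  have hM : 0 ≤ M := by
    simpa using (add_nonneg (norm_nonneg _) (norm_nonneg _)).trans (huv 0 le_rfl)
  set K := Lg * M * Real.exp (-(γB * t)) with hK
  have hkernel : ∀ s ∈ Ioc 0 t,
      ‖mApply (expM B (t - s)) (G s (u s) (v s))‖ ≤ K * Real.exp ((γB - γ) * s) := by
    rintro s ⟨hs0, hst⟩
    calc ‖mApply (expM B (t - s)) (G s (u s) (v s))‖
        ≤ Real.exp (-γB * (t - s)) * (Lg * (Real.exp (-(γ * s)) * M)) := by
          refine (hB _ (by linarith) _).trans ?_
          gcongr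
          exact (hGgrow s hs0.le _ _).trans (by gcongr; exact huv s hs0.le)
      _ = Lg * M * Real.exp (-γB * (t - s) + -(γ * s)) := by rw [Real.exp_add]; ring
      _ = K * Real.exp ((γB - γ) * s) := by
          rw [hK, mul_assoc (Lg * M), ← Real.exp_add]; ring_nf
  have hdecay : Real.exp (γ * t) * Real.exp (-(γB * t)) ≤ 1 := by
    rw [← Real.exp_add, Real.exp_le_one_iff]
    nlinarith
  calc Real.exp (γ * t) * ‖IB B G v₀ u v t‖
      ≤ Real.exp (γ * t) * (Real.exp (-(γB * t)) * ‖v₀‖ +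
          K * ((Real.exp ((γB - γ) * t) - Real.exp ((γB - γ) * 0)) / (γB - γ))) := by
        rw [IB]
        gcongr
        refine (norm_add_le _ _).trans (add_le_add ?_ ?_)
        · simpa using hB t ht v₀
        · exact norm_intervalIntegral_le_of_norm_le_exp (by linarith) ht hkernel
    _ = Real.exp (γ * t) * Real.exp (-(γB * t)) * ‖v₀‖ +
          Lg / (γB - γ) * M * (1 - Real.exp (γ * t) * Real.exp (-(γB * t))) := by
        have hcancel : Real.exp (γ * t) * Real.exp (-(γB * t)) * Real.exp ((γB - γ) * t) = 1 := by
          rw [← Real.exp_add, ← Real.exp_add, ← Real.exp_zero]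
          ring_nf
        rw [hK, mul_zero, Real.exp_zero]
        linear_combination Lg / (γB - γ) * M * hcancel
    _ ≤ ‖v₀‖ + Lg / (γB - γ) * M := by
        have hgap : 0 < γB - γ := by linarith
        nlinarith [mul_nonneg (sub_nonneg.2 hdecay) (norm_nonneg v₀),
          mul_nonneg (by positivity : 0 ≤ Real.exp (γ * t) * Real.exp (-(γB * t)))
            (by positivity : 0 ≤ Lg / (γB - γ) * M)]

theorem statement12_general
    (n : ℕ)
    (A B : Matrix (Fin n) (Fin n) ℝ) (γA' γB : ℝ)
    (hA : ∀ t ≤ (0:ℝ), ∀ x : Vec n, ‖mApply (expM A t) x‖ ≤ Real.exp (-γA' * t) * ‖x‖)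
    (hB : ∀ t ≥ (0:ℝ), ∀ y : Vec n, ‖mApply (expM B t) y‖ ≤ Real.exp (-γB * t) * ‖y‖)
    (γ ε : ℝ) (hγγB : γ < γB) (hε : 0 < ε) (hεγ : ε * γA' < γ)
    (F G : ℝ → Vec n → Vec n → Vec n) (Lf Lg : ℝ) (hLf : 0 < Lf) (hLg : 0 < Lg)
    (hFgrow : ∀ s ≥ (0:ℝ), ∀ a b : Vec n, ‖F s a b‖ ≤ Lf * (‖a‖ + ‖b‖))
    (hGgrow : ∀ s ≥ (0:ℝ), ∀ a b : Vec n, ‖G s a b‖ ≤ Lg * (‖a‖ + ‖b‖))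
    (v₀ : Vec n)
    (hρ : ε * Lf / (γ - ε * γA') + Lg / (γB - γ) < 1)
    (u v : ℝ → Vec n) (hu : memCpos γ u) (hv : memCpos γ v)
    (hfixA : ∀ t ≥ (0:ℝ),
      IntegrableOn (fun s => mApply (expM A (ε * (t - s))) (F s (u s) (v s)))
          (Ici t) volume ∧
        u t = IA A ε F u v t)
    (hfixB : ∀ t ≥ (0:ℝ), v t = IB B G v₀ u v t) :
    (∀ t ≥ (0:ℝ), ∀ s ≥ (0:ℝ),
        Real.exp (γ * t) * ‖u t‖ + Real.exp (γ * s) * ‖v s‖ ≤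
          ‖v₀‖ / (1 - (ε * Lf / (γ - ε * γA') + Lg / (γB - γ)))) ∧
      ∀ t ≥ (0:ℝ),
        ‖u t‖ + ‖v t‖ ≤
          Real.exp (-γ * t) * ‖v₀‖ /
            (1 - (ε * Lf / (γ - ε * γA') + Lg / (γB - γ))) := by
  set M := pNorm γ u + pNorm γ v
  have huv : ∀ s ≥ (0:ℝ), ‖u s‖ + ‖v s‖ ≤ Real.exp (-(γ * s)) * M := fun s hs => by
    rw [mul_add]
    exact add_le_add (hu.norm_le_exp_mul_pNorm hs) (hv.norm_le_exp_mul_pNorm hs)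
  have hMu : pNorm γ u ≤ ε * Lf / (γ - ε * γA') * M := pNorm_le fun t ht => by
    rw [(hfixA t ht).2]
    exact exp_mul_norm_IA_le hA hε hεγ hLf.le hFgrow huv ht
  have hMv : pNorm γ v ≤ ‖v₀‖ + Lg / (γB - γ) * M := pNorm_le fun t ht => by
    rw [hfixB t ht]
    exact exp_mul_norm_IB_le hB hγγB hLg.le hGgrow huv ht
  have hM : M ≤ ‖v₀‖ / (1 - (ε * Lf / (γ - ε * γA') + Lg / (γB - γ))) := by
    rw [le_div_iff₀ (by linarith)]
    linarith
  refine ⟨fun t ht s hs => ?_, fun t ht => ?_⟩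
  · exact (add_le_add (hu.exp_mul_norm_le_pNorm ht) (hv.exp_mul_norm_le_pNorm hs)).trans hM
  · calc ‖u t‖ + ‖v t‖ ≤ Real.exp (-(γ * t)) * M := huv t ht
      _ ≤ _ := by
        rw [neg_mul, mul_div_assoc]
        gcongr

/-- exponential tracking: a solution of the forward Lyapunov–Perron
equations with `ρ(ε) < 1` satisfies `‖Ψ‖_γ^+ ≤ |v̂₀|/(1 − ρ(ε))`, hence
`|û(t)| + |v̂(t)| ≤ e^{−γt}|v̂₀|/(1 − ρ(ε))` for all `t ≥ 0`. -/
theorem statement12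
    (n : ℕ) (hn : 0 < n)
    (A B : Matrix (Fin n) (Fin n) ℝ) (γA' γB : ℝ) (hγA' : 0 < γA') (hγB : 0 < γB)
    (hA : ∀ t ≤ (0:ℝ), ∀ x : Vec n, ‖mApply (expM A t) x‖ ≤ Real.exp (-γA' * t) * ‖x‖)
    (hB : ∀ t ≥ (0:ℝ), ∀ y : Vec n, ‖mApply (expM B t) y‖ ≤ Real.exp (-γB * t) * ‖y‖)
    (γ ε : ℝ) (hγ : 0 < γ) (hγγB : γ < γB) (hε : 0 < ε) (hεγ : ε * γA' < γ)
    (F G : ℝ → Vec n → Vec n → Vec n) (Lf Lg : ℝ) (hLf : 0 < Lf) (hLg : 0 < Lg)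
    (hFcont : Continuous fun p : ℝ × Vec n × Vec n => F p.1 p.2.1 p.2.2)
    (hGcont : Continuous fun p : ℝ × Vec n × Vec n => G p.1 p.2.1 p.2.2)
    (hFgrow : ∀ s ≥ (0:ℝ), ∀ a b : Vec n, ‖F s a b‖ ≤ Lf * (‖a‖ + ‖b‖))
    (hGgrow : ∀ s ≥ (0:ℝ), ∀ a b : Vec n, ‖G s a b‖ ≤ Lg * (‖a‖ + ‖b‖))
    (v₀ : Vec n)
    (hρ : ε * Lf / (γ - ε * γA') + Lg / (γB - γ) < 1)
    (u v : ℝ → Vec n) (hu : memCpos γ u) (hv : memCpos γ v)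
    (hfixA : ∀ t ≥ (0:ℝ),
      IntegrableOn (fun s => mApply (expM A (ε * (t - s))) (F s (u s) (v s)))
          (Ici t) volume ∧
        u t = IA A ε F u v t)
    (hfixB : ∀ t ≥ (0:ℝ), v t = IB B G v₀ u v t) :
    (∀ t ≥ (0:ℝ), ∀ s ≥ (0:ℝ),
        Real.exp (γ * t) * ‖u t‖ + Real.exp (γ * s) * ‖v s‖ ≤
          ‖v₀‖ / (1 - (ε * Lf / (γ - ε * γA') + Lg / (γB - γ)))) ∧
      ∀ t ≥ (0:ℝ),
        ‖u t‖ + ‖v t‖ ≤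
          Real.exp (-γ * t) * ‖v₀‖ /
            (1 - (ε * Lf / (γ - ε * γA') + Lg / (γB - γ))) :=
  statement12_general n A B γA' γB hA hB γ ε hγγB hε hεγ F G Lf Lg hLf hLg hFgrow hGgrow v₀ hρ u v
    hu hv hfixA hfixB
end
end

section
/- Fix ρ̄ ∈ (0,1) and u₀ ∈ ℝ^n. There exists a constant C ≥ 0, depending only on n, A, |u₀|, L_f, C_f, L_g, C_g, γ, γ_A', γ_B, ‖η‖_γ^−, ‖ξ‖_γ^− and ρ̄, such that for every ε > 0 with εγ_A' < γ and ρ(ε) := εL_f/(γ − εγ_A') + L_g/(γ_B − γ) ≤ ρ̄, the u-component u^ε(·;u₀) of the unique fixed point of the Lyapunov–Perron map satisfies sup_{t≤0} e^{γt}|u^ε(t;u₀) − u₀| ≤ C·ε. -/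
open MeasureTheory Set Filter

noncomputable section

/-- `(u, v)` is a fixed point of the Lyapunov–Perron map in `C_γ^-`, with forcings
`(η, ξ)` and initial value `u₀` (the fixed-point equations are required on `(-∞, 0]`,
with the improper integral in the `B`-component converging absolutely). -/
def IsLPFixedPt {n : ℕ} (γ : ℝ) (A B : Matrix (Fin n) (Fin n) ℝ) (ε : ℝ)
    (f g : Vec n → Vec n → Vec n) (η ξ : ℝ → Vec n) (u₀ : Vec n)
    (u v : ℝ → Vec n) : Prop :=
  memCneg γ u ∧ memCneg γ v ∧
    (∀ t ≤ (0:ℝ), u t = KA A ε u₀ f η ξ u v t) ∧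
    (∀ t ≤ (0:ℝ),
      IntegrableOn (fun s => mApply (expM B (t - s)) (g (u s + η s) (v s + ξ s)))
          (Iic t) volume ∧
        v t = KB B g η ξ u v t)

/-!
With `c = γ - εγ_A'`, the growth bounds make both nonlinearities `O(e^{-γs})` along a point of
`C_γ^-`, with constant `L (C + M)`, where `M` is the sum of the weighted norms of `u, v, η, ξ`.
Against `e^{-γs}` the kernel `ε e^{εA(t-s)}` on `[t, 0]` gains the factor `ε L_f / c` and the kernel
`e^{B(t-s)}` on `(-∞, t]` the factor `L_g / (γ_B - γ)`; these add up to `ρ(ε) ≤ ρ̄ < 1`, so the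
fixed-point equations bound `‖u‖ + ‖v‖` uniformly in `ε`. Then
`u(t) - u₀ = (e^{εAt} - 1) u₀ + ε ∫_0^t e^{εA(t-s)} f ds` is `ε / c` times a bounded quantity, and
`ε L_f / c ≤ ρ̄` keeps `c ≥ γ L_f / (L_f + ρ̄ γ_A')` away from zero.
-/

section MatrixExp

-- matrices carry no global normed-ring instance; any one inducing the product topology lets us
-- differentiate `exp`
attribute [local instance] Matrix.linftyOpNormedRing Matrix.linftyOpNormedAlgebra

variable {n : ℕ}

lemma mApply_expM_zero (A : Matrix (Fin n) (Fin n) ℝ) (x : Vec n) :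
    mApply (expM A 0) x = x := by
  simp [mApply, expM]

lemma hasDerivAt_mApply_expM (A : Matrix (Fin n) (Fin n) ℝ) (ε : ℝ) (x : Vec n) (s : ℝ) :
    HasDerivAt (fun r => mApply (expM A (ε * r)) x)
      (ε • mApply (expM A (ε * s)) (mApply A x)) s := by
  let evalAt : Matrix (Fin n) (Fin n) ℝ →L[ℝ] Vec n :=
    ((LinearMap.applyₗ x).comp Matrix.toEuclideanLin.toLinearMap).toContinuousLinearMap
  have hexp : HasDerivAt (fun r : ℝ => NormedSpace.exp ((ε * r) • A))
      (ε • (NormedSpace.exp ((ε * s) • A) * A)) s :=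
    (hasDerivAt_exp_smul_const A (ε * s)).scomp s
      ((hasDerivAt_id s).const_mul ε |>.congr_deriv (mul_one ε))
  refine (evalAt.hasFDerivAt.comp_hasDerivAt s hexp).congr_deriv ?_
  show mApply (ε • (NormedSpace.exp ((ε * s) • A) * A)) x = _
  simp [mApply, expM]

lemma continuous_mApply_expM (A : Matrix (Fin n) (Fin n) ℝ) (ε : ℝ) (x : Vec n) :
    Continuous fun r => mApply (expM A (ε * r)) x :=
  continuous_iff_continuousAt.2 fun s => (hasDerivAt_mApply_expM A ε x s).continuousAt

end MatrixExp

section WeightedNorm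

variable {n : ℕ} {γ : ℝ} {u : ℝ → Vec n}

lemma exp_mul_norm_le_cNorm
    (hu : BddAbove ((fun t => Real.exp (γ * t) * ‖u t‖) '' Iic (0:ℝ))) {t : ℝ} (ht : t ≤ 0) :
    Real.exp (γ * t) * ‖u t‖ ≤ cNorm γ u :=
  le_csSup hu ⟨t, ht, rfl⟩

lemma cNorm_nonneg_s16 (hu : BddAbove ((fun t => Real.exp (γ * t) * ‖u t‖) '' Iic (0:ℝ))) :
    0 ≤ cNorm γ u :=
  (by positivity : (0:ℝ) ≤ _).trans (exp_mul_norm_le_cNorm hu le_rfl)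

lemma norm_le_cNorm_mul_exp
    (hu : BddAbove ((fun t => Real.exp (γ * t) * ‖u t‖) '' Iic (0:ℝ))) {t : ℝ} (ht : t ≤ 0) :
    ‖u t‖ ≤ cNorm γ u * Real.exp (-(γ * t)) := by
  rw [Real.exp_neg, le_mul_inv_iff₀ (Real.exp_pos _), mul_comm]
  exact exp_mul_norm_le_cNorm hu ht

lemma cNorm_le {K : ℝ} (h : ∀ t ≤ (0:ℝ), Real.exp (γ * t) * ‖u t‖ ≤ K) : cNorm γ u ≤ K :=
  csSup_le (nonempty_Iic.image _) (forall_mem_image.2 fun t ht => h t ht)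

end WeightedNorm

section ExpKernel

variable {E : Type*} [NormedAddCommGroup E] [NormedSpace ℝ E]

lemma integral_exp_mul_le_inv {c t : ℝ} (hc : 0 < c) (ht : t ≤ 0) :
    ∫ s in t..0, Real.exp (c * s) ≤ 1 / c := by
  calc ∫ s in t..0, Real.exp (c * s) = ∫ s in Ioc t 0, Real.exp (c * s) :=
        intervalIntegral.integral_of_le ht
    _ ≤ ∫ s in Iic 0, Real.exp (c * s) :=
        setIntegral_mono_set (integrableOn_exp_mul_Iic hc 0)
          (ae_of_all _ fun s => (Real.exp_pos _).le) Ioc_subset_Iic_self.eventuallyLE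
    _ = 1 / c := by rw [integral_exp_mul_Iic hc, mul_zero, Real.exp_zero]

lemma norm_integral_le_of_norm_le_mul_exp {F : ℝ → E} {c t K : ℝ} (hc : 0 < c) (ht : t ≤ 0)
    (hK : 0 ≤ K) (hF : ∀ s ∈ Ioc t 0, ‖F s‖ ≤ K * Real.exp (c * s)) :
    ‖∫ s in t..0, F s‖ ≤ K / c :=
  calc ‖∫ s in t..0, F s‖ ≤ ∫ s in t..0, K * Real.exp (c * s) :=
        intervalIntegral.norm_integral_le_of_norm_le ht (ae_of_all _ hF)
          ((by fun_prop : Continuous fun s => K * Real.exp (c * s)).intervalIntegrable _ _)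
    _ = K * ∫ s in t..0, Real.exp (c * s) := intervalIntegral.integral_const_mul _ _
    _ ≤ K * (1 / c) := by gcongr; exact integral_exp_mul_le_inv hc ht
    _ = K / c := mul_one_div K c

end ExpKernel

section LyapunovPerronEstimates

variable {n : ℕ} {A B : Matrix (Fin n) (Fin n) ℝ} {γA' γB γ ε : ℝ}

lemma exp_mul_norm_mApply_expM_le
    (hA : ∀ t ≤ (0:ℝ), ∀ x : Vec n, ‖mApply (expM A t) x‖ ≤ Real.exp (-γA' * t) * ‖x‖)
    (hε : 0 ≤ ε) (hc : 0 ≤ γ - ε * γA') {t : ℝ} (ht : t ≤ 0) (x : Vec n) :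
    Real.exp (γ * t) * ‖mApply (expM A (ε * t)) x‖ ≤ ‖x‖ :=
  calc Real.exp (γ * t) * ‖mApply (expM A (ε * t)) x‖
      ≤ Real.exp (γ * t) * (Real.exp (-γA' * (ε * t)) * ‖x‖) := by
        gcongr; exact hA _ (mul_nonpos_of_nonneg_of_nonpos hε ht) x
    _ = Real.exp ((γ - ε * γA') * t) * ‖x‖ := by rw [← mul_assoc, ← Real.exp_add]; ring_nf
    _ ≤ 1 * ‖x‖ := by gcongr; exact Real.exp_le_one_iff.2 (mul_nonpos_of_nonneg_of_nonpos hc ht)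
    _ = ‖x‖ := one_mul _

lemma exp_mul_norm_mApply_expM_sub_le
    (hA : ∀ t ≤ (0:ℝ), ∀ x : Vec n, ‖mApply (expM A t) x‖ ≤ Real.exp (-γA' * t) * ‖x‖)
    (hγ : 0 ≤ γ) (hε : 0 ≤ ε) (hc : 0 < γ - ε * γA') {t : ℝ} (ht : t ≤ 0) (x : Vec n) :
    Real.exp (γ * t) * ‖mApply (expM A (ε * t)) x - x‖ ≤ ε * ‖mApply A x‖ / (γ - ε * γA') := by
  have hFTC : x - mApply (expM A (ε * t)) x
      = ∫ s in t..0, ε • mApply (expM A (ε * s)) (mApply A x) := by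
    rw [intervalIntegral.integral_eq_sub_of_hasDerivAt
      (fun s _ => hasDerivAt_mApply_expM A ε x s)
      (((continuous_mApply_expM A ε _).const_smul ε).intervalIntegrable _ _),
      mul_zero, mApply_expM_zero]
  have hbound : ∀ s ∈ Ioc t 0, ‖ε • mApply (expM A (ε * s)) (mApply A x)‖
      ≤ ε * ‖mApply A x‖ * Real.exp (-(γ * t)) * Real.exp ((γ - ε * γA') * s) := by
    rintro s ⟨hts, hs0⟩
    calc ‖ε • mApply (expM A (ε * s)) (mApply A x)‖
        ≤ ε * (Real.exp (-γA' * (ε * s)) * ‖mApply A x‖) := by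
          rw [norm_smul, Real.norm_of_nonneg hε]
          gcongr; exact hA _ (mul_nonpos_of_nonneg_of_nonpos hε hs0) _
      _ = ε * ‖mApply A x‖ * Real.exp (-(γ * s)) * Real.exp ((γ - ε * γA') * s) := by
          rw [mul_assoc _ (Real.exp _), ← Real.exp_add]; ring_nf
      _ ≤ _ := by gcongr
  have h := norm_integral_le_of_norm_le_mul_exp hc ht (by positivity) hbound
  rw [norm_sub_rev, hFTC]
  calc Real.exp (γ * t) * ‖∫ s in t..0, ε • mApply (expM A (ε * s)) (mApply A x)‖
      ≤ Real.exp (γ * t) * (ε * ‖mApply A x‖ * Real.exp (-(γ * t)) / (γ - ε * γA')) := by gcongr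
    _ = ε * ‖mApply A x‖ / (γ - ε * γA') := by
      rw [Real.exp_neg]; field_simp

lemma exp_mul_norm_integral_expM_le
    (hA : ∀ t ≤ (0:ℝ), ∀ x : Vec n, ‖mApply (expM A t) x‖ ≤ Real.exp (-γA' * t) * ‖x‖)
    (hε : 0 ≤ ε) (hc : 0 < γ - ε * γA') {φ : ℝ → Vec n} {K t : ℝ} (ht : t ≤ 0) (hK : 0 ≤ K)
    (hφ : ∀ s ∈ Icc t 0, ‖φ s‖ ≤ K * Real.exp (-(γ * s))) :
    Real.exp (γ * t) * ‖∫ s in (0:ℝ)..t, mApply (expM A (ε * (t - s))) (φ s)‖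
      ≤ K / (γ - ε * γA') := by
  have hsub : ∫ s in (0:ℝ)..t, mApply (expM A (ε * (t - s))) (φ s)
      = -∫ s in t..0, mApply (expM A (ε * s)) (φ (t - s)) := by
    have h := intervalIntegral.integral_comp_sub_left (a := t) (b := 0)
      (fun s => mApply (expM A (ε * s)) (φ (t - s))) t
    simp only [sub_sub_cancel, sub_zero, sub_self] at h
    rw [intervalIntegral.integral_symm, h]
  have hbound : ∀ s ∈ Ioc t 0, ‖mApply (expM A (ε * s)) (φ (t - s))‖
      ≤ K * Real.exp (-(γ * t)) * Real.exp ((γ - ε * γA') * s) := by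
    rintro s ⟨hts, hs0⟩
    calc ‖mApply (expM A (ε * s)) (φ (t - s))‖
        ≤ Real.exp (-γA' * (ε * s)) * (K * Real.exp (-(γ * (t - s)))) := by
          refine (hA _ (mul_nonpos_of_nonneg_of_nonpos hε hs0) _).trans ?_
          gcongr; exact hφ _ ⟨by linarith, by linarith⟩
      _ = K * Real.exp (-(γ * t)) * Real.exp ((γ - ε * γA') * s) := by
          rw [mul_left_comm, mul_assoc, ← Real.exp_add, ← Real.exp_add]; ring_nf
  have h := norm_integral_le_of_norm_le_mul_exp hc ht (by positivity) hbound
  rw [hsub, norm_neg]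
  calc Real.exp (γ * t) * ‖∫ s in t..0, mApply (expM A (ε * s)) (φ (t - s))‖
      ≤ Real.exp (γ * t) * (K * Real.exp (-(γ * t)) / (γ - ε * γA')) := by gcongr
    _ = K / (γ - ε * γA') := by rw [Real.exp_neg]; field_simp

lemma exp_mul_norm_setIntegral_expM_le
    (hB : ∀ t ≥ (0:ℝ), ∀ y : Vec n, ‖mApply (expM B t) y‖ ≤ Real.exp (-γB * t) * ‖y‖)
    (hγγB : γ < γB) {φ : ℝ → Vec n} {K t : ℝ}
    (hφ : ∀ s ≤ t, ‖φ s‖ ≤ K * Real.exp (-(γ * s))) :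
    Real.exp (γ * t) * ‖∫ s in Iic t, mApply (expM B (t - s)) (φ s)‖ ≤ K / (γB - γ) := by
  have hd : 0 < γB - γ := sub_pos.2 hγγB
  have hbound : ∀ s ∈ Iic t, ‖mApply (expM B (t - s)) (φ s)‖
      ≤ K * Real.exp (-(γB * t)) * Real.exp ((γB - γ) * s) := by
    intro s hs
    calc ‖mApply (expM B (t - s)) (φ s)‖
        ≤ Real.exp (-γB * (t - s)) * (K * Real.exp (-(γ * s))) := by
          refine (hB _ (sub_nonneg.2 hs) _).trans ?_
          gcongr; exact hφ s hs
      _ = K * Real.exp (-(γB * t)) * Real.exp ((γB - γ) * s) := by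
          rw [mul_left_comm, mul_assoc, ← Real.exp_add, ← Real.exp_add]; ring_nf
  have h : ‖∫ s in Iic t, mApply (expM B (t - s)) (φ s)‖
      ≤ K * Real.exp (-(γB * t)) * (Real.exp ((γB - γ) * t) / (γB - γ)) := by
    rw [← integral_exp_mul_Iic hd, ← integral_const_mul]
    exact norm_integral_le_of_norm_le ((integrableOn_exp_mul_Iic hd t).const_mul _)
      ((ae_restrict_iff' measurableSet_Iic).2 (ae_of_all _ hbound))
  calc Real.exp (γ * t) * ‖∫ s in Iic t, mApply (expM B (t - s)) (φ s)‖
      ≤ Real.exp (γ * t) * (K * Real.exp (-(γB * t)) * (Real.exp ((γB - γ) * t) / (γB - γ))) := by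
        gcongr
    _ = K * Real.exp (γ * t + -(γB * t) + (γB - γ) * t) / (γB - γ) := by
        rw [Real.exp_add, Real.exp_add]; ring
    _ = K / (γB - γ) := by
        rw [show γ * t + -(γB * t) + (γB - γ) * t = 0 by ring, Real.exp_zero, mul_one]

variable {u₀ : Vec n} {f g : Vec n → Vec n → Vec n} {η ξ u v : ℝ → Vec n}

lemma exp_mul_norm_KA_le
    (hA : ∀ t ≤ (0:ℝ), ∀ x : Vec n, ‖mApply (expM A t) x‖ ≤ Real.exp (-γA' * t) * ‖x‖)
    (hε : 0 ≤ ε) (hc : 0 < γ - ε * γA') {K t : ℝ} (ht : t ≤ 0) (hK : 0 ≤ K)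
    (hf : ∀ s ∈ Icc t 0, ‖f (u s + η s) (v s + ξ s)‖ ≤ K * Real.exp (-(γ * s))) :
    Real.exp (γ * t) * ‖KA A ε u₀ f η ξ u v t‖ ≤ ‖u₀‖ + ε * (K / (γ - ε * γA')) := by
  have h₀ := exp_mul_norm_mApply_expM_le hA hε hc.le ht u₀
  have h₁ := exp_mul_norm_integral_expM_le hA hε hc ht hK hf
  rw [KA]
  calc _ ≤ Real.exp (γ * t) * (‖mApply (expM A (ε * t)) u₀‖ + ‖ε •
        ∫ s in (0:ℝ)..t, mApply (expM A (ε * (t - s))) (f (u s + η s) (v s + ξ s))‖) := by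
        gcongr; exact norm_add_le _ _
    _ = Real.exp (γ * t) * ‖mApply (expM A (ε * t)) u₀‖ + ε * (Real.exp (γ * t) *
        ‖∫ s in (0:ℝ)..t, mApply (expM A (ε * (t - s))) (f (u s + η s) (v s + ξ s))‖) := by
        rw [norm_smul, Real.norm_of_nonneg hε]; ring
    _ ≤ _ := by gcongr

lemma exp_mul_norm_KA_sub_le
    (hA : ∀ t ≤ (0:ℝ), ∀ x : Vec n, ‖mApply (expM A t) x‖ ≤ Real.exp (-γA' * t) * ‖x‖)
    (hγ : 0 ≤ γ) (hε : 0 ≤ ε) (hc : 0 < γ - ε * γA') {K t : ℝ} (ht : t ≤ 0) (hK : 0 ≤ K)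
    (hf : ∀ s ∈ Icc t 0, ‖f (u s + η s) (v s + ξ s)‖ ≤ K * Real.exp (-(γ * s))) :
    Real.exp (γ * t) * ‖KA A ε u₀ f η ξ u v t - u₀‖
      ≤ ε * (‖mApply A u₀‖ + K) / (γ - ε * γA') := by
  have h₀ := exp_mul_norm_mApply_expM_sub_le hA hγ hε hc ht u₀
  have h₁ := exp_mul_norm_integral_expM_le hA hε hc ht hK hf
  rw [KA, add_sub_right_comm]
  calc _ ≤ Real.exp (γ * t) * (‖mApply (expM A (ε * t)) u₀ - u₀‖ + ‖ε •
        ∫ s in (0:ℝ)..t, mApply (expM A (ε * (t - s))) (f (u s + η s) (v s + ξ s))‖) := by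
        gcongr; exact norm_add_le _ _
    _ = Real.exp (γ * t) * ‖mApply (expM A (ε * t)) u₀ - u₀‖ + ε * (Real.exp (γ * t) *
        ‖∫ s in (0:ℝ)..t, mApply (expM A (ε * (t - s))) (f (u s + η s) (v s + ξ s))‖) := by
        rw [norm_smul, Real.norm_of_nonneg hε]; ring
    _ ≤ ε * ‖mApply A u₀‖ / (γ - ε * γA') + ε * (K / (γ - ε * γA')) := by gcongr
    _ = _ := by ring

end LyapunovPerronEstimates

lemma norm_apply_le_of_growth {n : ℕ} {F : Vec n → Vec n → Vec n} {L C γ : ℝ} (hL : 0 ≤ L)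
    (hC : 0 ≤ C) (hF : ∀ x y : Vec n, ‖F x y‖ ≤ L * (C + ‖x‖ + ‖y‖)) (hγ : 0 ≤ γ)
    {u v η ξ : ℝ → Vec n}
    (hu : BddAbove ((fun t => Real.exp (γ * t) * ‖u t‖) '' Iic (0:ℝ)))
    (hv : BddAbove ((fun t => Real.exp (γ * t) * ‖v t‖) '' Iic (0:ℝ)))
    (hη : BddAbove ((fun t => Real.exp (γ * t) * ‖η t‖) '' Iic (0:ℝ)))
    (hξ : BddAbove ((fun t => Real.exp (γ * t) * ‖ξ t‖) '' Iic (0:ℝ))) {s : ℝ} (hs : s ≤ 0) :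
    ‖F (u s + η s) (v s + ξ s)‖
      ≤ L * (C + (cNorm γ u + cNorm γ v + cNorm γ η + cNorm γ ξ)) * Real.exp (-(γ * s)) := by
  have he : 1 ≤ Real.exp (-(γ * s)) := Real.one_le_exp (by nlinarith)
  have hx := (norm_add_le (u s) (η s)).trans
    (add_le_add (norm_le_cNorm_mul_exp hu hs) (norm_le_cNorm_mul_exp hη hs))
  have hy := (norm_add_le (v s) (ξ s)).trans
    (add_le_add (norm_le_cNorm_mul_exp hv hs) (norm_le_cNorm_mul_exp hξ hs))
  calc ‖F (u s + η s) (v s + ξ s)‖ ≤ L * (C + ‖u s + η s‖ + ‖v s + ξ s‖) := hF _ _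
    _ ≤ L * ((C + (cNorm γ u + cNorm γ v + cNorm γ η + cNorm γ ξ)) * Real.exp (-(γ * s))) := by
        gcongr
        nlinarith [le_mul_of_one_le_right hC he]
    _ = _ := (mul_assoc _ _ _).symm

lemma mul_div_add_mul_le_sub_mul {γ γA' ε L ρ : ℝ} (hL : 0 < L) (hγA' : 0 ≤ γA') (hρ : 0 ≤ ρ)
    (hc : ε * γA' < γ) (h : ε * L / (γ - ε * γA') ≤ ρ) :
    γ * L / (L + ρ * γA') ≤ γ - ε * γA' := by
  rw [div_le_iff₀ (sub_pos.2 hc)] at h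
  rw [div_le_iff₀ (by positivity)]
  nlinarith [mul_le_mul_of_nonneg_right h hγA']

theorem IsLPFixedPt.cNorm_add_cNorm_le {n : ℕ} {A B : Matrix (Fin n) (Fin n) ℝ}
    {γA' γB γ ε : ℝ}
    (hA : ∀ t ≤ (0:ℝ), ∀ x : Vec n, ‖mApply (expM A t) x‖ ≤ Real.exp (-γA' * t) * ‖x‖)
    (hB : ∀ t ≥ (0:ℝ), ∀ y : Vec n, ‖mApply (expM B t) y‖ ≤ Real.exp (-γB * t) * ‖y‖)
    (hγ : 0 ≤ γ) (hγγB : γ < γB) {f g : Vec n → Vec n → Vec n} {Lf Lg Cf Cg : ℝ}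
    (hLf : 0 ≤ Lf) (hLg : 0 ≤ Lg) (hCf : 0 ≤ Cf) (hCg : 0 ≤ Cg)
    (hfGrow : ∀ x y : Vec n, ‖f x y‖ ≤ Lf * (Cf + ‖x‖ + ‖y‖))
    (hgGrow : ∀ x y : Vec n, ‖g x y‖ ≤ Lg * (Cg + ‖x‖ + ‖y‖)) {η ξ : ℝ → Vec n}
    (hη : BddAbove ((fun t => Real.exp (γ * t) * ‖η t‖) '' Iic (0:ℝ)))
    (hξ : BddAbove ((fun t => Real.exp (γ * t) * ‖ξ t‖) '' Iic (0:ℝ)))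
    {ρbar : ℝ} (hρ1 : ρbar < 1) (hε : 0 ≤ ε) (hεγ : ε * γA' < γ)
    (hρ : ε * Lf / (γ - ε * γA') + Lg / (γB - γ) ≤ ρbar) {u₀ : Vec n} {u v : ℝ → Vec n}
    (hfix : IsLPFixedPt γ A B ε f g η ξ u₀ u v) :
    cNorm γ u + cNorm γ v ≤ (‖u₀‖ + ρbar * (Cf + Cg + cNorm γ η + cNorm γ ξ)) / (1 - ρbar) := by
  obtain ⟨⟨-, hu⟩, ⟨-, hv⟩, hKA, hKB⟩ := hfix
  have hc : 0 < γ - ε * γA' := sub_pos.2 hεγ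
  set M := cNorm γ u + cNorm γ v + cNorm γ η + cNorm γ ξ
  have hM0 : 0 ≤ M := by
    have := cNorm_nonneg_s16 hu; have := cNorm_nonneg_s16 hv
    have := cNorm_nonneg_s16 hη; have := cNorm_nonneg_s16 hξ
    positivity
  have hNu : cNorm γ u ≤ ‖u₀‖ + ε * (Lf * (Cf + M) / (γ - ε * γA')) := cNorm_le fun t ht => by
    rw [hKA t ht]
    exact exp_mul_norm_KA_le hA hε hc ht (by positivity) fun s hs =>
      norm_apply_le_of_growth hLf hCf hfGrow hγ hu hv hη hξ hs.2
  have hNv : cNorm γ v ≤ Lg * (Cg + M) / (γB - γ) := cNorm_le fun t ht => by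
    rw [(hKB t ht).2, KB]
    exact exp_mul_norm_setIntegral_expM_le hB hγγB fun s hs =>
      norm_apply_le_of_growth hLg hCg hgGrow hγ hu hv hη hξ (hs.trans ht)
  have hgain : ε * (Lf * (Cf + M) / (γ - ε * γA')) + Lg * (Cg + M) / (γB - γ)
      ≤ ρbar * (Cf + Cg + M) :=
    calc _ = ε * Lf / (γ - ε * γA') * (Cf + M) + Lg / (γB - γ) * (Cg + M) := by ring
      _ ≤ ε * Lf / (γ - ε * γA') * (Cf + Cg + M) + Lg / (γB - γ) * (Cf + Cg + M) := by
          gcongr <;> linarith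
      _ = (ε * Lf / (γ - ε * γA') + Lg / (γB - γ)) * (Cf + Cg + M) := by ring
      _ ≤ ρbar * (Cf + Cg + M) := by gcongr
  rw [le_div_iff₀ (sub_pos.2 hρ1)]
  linarith

theorem statement16_general
    (n : ℕ)
    (A B : Matrix (Fin n) (Fin n) ℝ) (γA' γB : ℝ) (hγA' : 0 < γA')
    (hA : ∀ t ≤ (0:ℝ), ∀ x : Vec n, ‖mApply (expM A t) x‖ ≤ Real.exp (-γA' * t) * ‖x‖)
    (hB : ∀ t ≥ (0:ℝ), ∀ y : Vec n, ‖mApply (expM B t) y‖ ≤ Real.exp (-γB * t) * ‖y‖)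
    (γ : ℝ) (hγ : 0 < γ) (hγγB : γ < γB)
    (f g : Vec n → Vec n → Vec n) (Lf Lg Cf Cg : ℝ)
    (hLf : 0 < Lf) (hLg : 0 < Lg) (hCf : 0 < Cf) (hCg : 0 < Cg)
    (hfGrow : ∀ x y : Vec n, ‖f x y‖ ≤ Lf * (Cf + ‖x‖ + ‖y‖))
    (hgGrow : ∀ x y : Vec n, ‖g x y‖ ≤ Lg * (Cg + ‖x‖ + ‖y‖))
    (η ξ : ℝ → Vec n) (hη : memCneg γ η) (hξ : memCneg γ ξ)
    (ρbar : ℝ) (hρbar : ρbar ∈ Ioo (0:ℝ) 1)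
    (u₀ : Vec n) :
    ∃ C : ℝ, 0 ≤ C ∧
      ∀ ε : ℝ, 0 < ε → ε * γA' < γ →
        ε * Lf / (γ - ε * γA') + Lg / (γB - γ) ≤ ρbar →
        ∀ u v : ℝ → Vec n, IsLPFixedPt γ A B ε f g η ξ u₀ u v →
          ∀ t ≤ (0:ℝ), Real.exp (γ * t) * ‖u t - u₀‖ ≤ C * ε := by
  obtain ⟨hρ0, hρ1⟩ := hρbar
  have hNη := cNorm_nonneg_s16 hη.2
  have hNξ := cNorm_nonneg_s16 hξ.2
  set M := (‖u₀‖ + ρbar * (Cf + Cg + cNorm γ η + cNorm γ ξ)) / (1 - ρbar)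
    + cNorm γ η + cNorm γ ξ
  have hM : 0 ≤ M := by have := sub_pos.2 hρ1; positivity
  refine ⟨(‖mApply A u₀‖ + Lf * (Cf + M)) / (γ * Lf / (Lf + ρbar * γA')), by positivity, ?_⟩
  intro ε hε hεγ hρ u v hfix t ht
  have hc : 0 < γ - ε * γA' := sub_pos.2 hεγ
  have huv := hfix.cNorm_add_cNorm_le hA hB hγ.le hγγB hLf.le hLg.le hCf.le hCg.le
    hfGrow hgGrow hη.2 hξ.2 hρ1 hε.le hεγ hρ
  obtain ⟨⟨-, hu⟩, ⟨-, hv⟩, hKA, -⟩ := hfix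
  have hgap : γ * Lf / (Lf + ρbar * γA') ≤ γ - ε * γA' :=
    mul_div_add_mul_le_sub_mul hLf hγA'.le hρ0.le hεγ
      (by linarith [div_nonneg hLg.le (sub_pos.2 hγγB).le])
  have hK : 0 ≤ Lf * (Cf + (cNorm γ u + cNorm γ v + cNorm γ η + cNorm γ ξ)) := by
    have := cNorm_nonneg_s16 hu; have := cNorm_nonneg_s16 hv; positivity
  rw [hKA t ht]
  calc _ ≤ ε * (‖mApply A u₀‖ + Lf * (Cf + (cNorm γ u + cNorm γ v + cNorm γ η + cNorm γ ξ)))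
        / (γ - ε * γA') :=
        exp_mul_norm_KA_sub_le hA hγ.le hε.le hc ht hK fun s hs =>
          norm_apply_le_of_growth hLf.le hCf.le hfGrow hγ.le hu hv hη.2 hξ.2 hs.2
    _ ≤ ε * (‖mApply A u₀‖ + Lf * (Cf + M)) / (γ * Lf / (Lf + ρbar * γA')) := by
        gcongr; linarith
    _ = _ := by ring

/-- uniformly for `ρ(ε) ≤ ρ̄ < 1`, the `u`-component of the fixed point
stays within `O(ε)` of the constant `u₀` in the `‖·‖_γ^-` norm:
`sup_{t ≤ 0} e^{γt}|u^ε(t;u₀) − u₀| ≤ C ε`. -/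
theorem statement16
    (n : ℕ) (hn : 0 < n)
    (A B : Matrix (Fin n) (Fin n) ℝ) (γA' γB : ℝ) (hγA' : 0 < γA') (hγB : 0 < γB)
    (hA : ∀ t ≤ (0:ℝ), ∀ x : Vec n, ‖mApply (expM A t) x‖ ≤ Real.exp (-γA' * t) * ‖x‖)
    (hB : ∀ t ≥ (0:ℝ), ∀ y : Vec n, ‖mApply (expM B t) y‖ ≤ Real.exp (-γB * t) * ‖y‖)
    (γ : ℝ) (hγ : 0 < γ) (hγγB : γ < γB)
    (f g : Vec n → Vec n → Vec n) (Lf Lg Cf Cg : ℝ)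
    (hLf : 0 < Lf) (hLg : 0 < Lg) (hCf : 0 < Cf) (hCg : 0 < Cg)
    (hfLip : ∀ x₁ y₁ x₂ y₂ : Vec n,
      ‖f x₁ y₁ - f x₂ y₂‖ ≤ Lf * (‖x₁ - x₂‖ + ‖y₁ - y₂‖))
    (hgLip : ∀ x₁ y₁ x₂ y₂ : Vec n,
      ‖g x₁ y₁ - g x₂ y₂‖ ≤ Lg * (‖x₁ - x₂‖ + ‖y₁ - y₂‖))
    (hfGrow : ∀ x y : Vec n, ‖f x y‖ ≤ Lf * (Cf + ‖x‖ + ‖y‖))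
    (hgGrow : ∀ x y : Vec n, ‖g x y‖ ≤ Lg * (Cg + ‖x‖ + ‖y‖))
    (η ξ : ℝ → Vec n) (hη : memCneg γ η) (hξ : memCneg γ ξ)
    (ρbar : ℝ) (hρbar : ρbar ∈ Ioo (0:ℝ) 1)
    (u₀ : Vec n) :
    ∃ C : ℝ, 0 ≤ C ∧
      ∀ ε : ℝ, 0 < ε → ε * γA' < γ →
        ε * Lf / (γ - ε * γA') + Lg / (γB - γ) ≤ ρbar →
        ∀ u v : ℝ → Vec n, IsLPFixedPt γ A B ε f g η ξ u₀ u v →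
          ∀ t ≤ (0:ℝ), Real.exp (γ * t) * ‖u t - u₀‖ ≤ C * ε :=
  statement16_general n A B γA' γB hγA' hA hB γ hγ hγγB f g Lf Lg Cf Cg hLf hLg hCf hCg hfGrow
    hgGrow η ξ hη hξ ρbar hρbar u₀
end
end
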